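/- arXiv:2111.02287 — 2 statements merged into one kernel-verified Lean document; each statement's English description precedes it below -/
import Mathlib

section
/- Let M = N - 1 where N ≥ 2. For every integer ℓ with 1 ≤ ℓ ≤ M, the quantity M! · C(M,ℓ) · (M!/ℓ!) · Σ_{i=0}^{ℓ} C(M,i)·C(ℓ,i) is divisible by N. -/
lemma aux_mul_dvd_factorial {a b n : ℕ} (hab : a ≠ b) (ha0 : 1 ≤ a) (ha : a ≤ n)
    (hb0 : 1 ≤ b) (hb : b ≤ n) : a * b ∣ Nat.factorial n := by
  rw [← Finset.prod_range_add_one_eq_factorial]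
  have hsub : ({a - 1, b - 1} : Finset ℕ) ⊆ Finset.range n := by
    intro x hx
    simp only [Finset.mem_insert, Finset.mem_singleton] at hx
    rcases hx with rfl | rfl <;> simp [Finset.mem_range] <;> omega
  calc a * b = ∏ i ∈ ({a - 1, b - 1} : Finset ℕ), (i + 1) := by
        rw [Finset.prod_pair (by omega)]; congr 1 <;> omega
    _ ∣ ∏ i ∈ Finset.range n, (i + 1) :=
        Finset.prod_dvd_prod_of_subset _ _ _ hsub

lemma aux_composite_dvd_factorial {n : ℕ} (h2 : 2 ≤ n) (hnp : ¬ n.Prime) (h4 : n ≠ 4) :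
    n ∣ Nat.factorial (n - 1) := by
  obtain ⟨m, hm1, hm2, hm3⟩ := Nat.exists_dvd_of_not_prime2 (by omega) hnp
  obtain ⟨k, rfl⟩ := hm1
  have hk2 : 2 ≤ k := by nlinarith
  by_cases hmk : m = k
  · subst hmk
    have hm3' : 3 ≤ m := by
      rcases Nat.lt_or_ge m 3 with h | h
      · interval_cases m <;> omega
      · exact h
    have hlt : 2 * m < m * m := by nlinarith
    have : m * (2 * m) ∣ Nat.factorial (m * m - 1) :=
      aux_mul_dvd_factorial (by omega) (by omega) (by omega) (by omega) (by omega)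
    exact dvd_trans (by exact ⟨2, by ring⟩) this
  · have hlt : k < m * k := by nlinarith
    exact aux_mul_dvd_factorial hmk (by omega) (by omega) (by omega) (by omega)

lemma aux_choose_zmod (p : ℕ) [Fact p.Prime] (i : ℕ) (hi : i ≤ p - 1) :
    ((Nat.choose (p - 1) i : ℕ) : ZMod p) = (-1) ^ i := by
  induction i with
  | zero => simp
  | succ j ih =>
    have hp2 : 2 ≤ p := (Fact.out : p.Prime).two_le
    have hj : j ≤ p - 1 := by omega
    have key : (p - 1).choose (j + 1) * (j + 1) = (p - 1).choose j * (p - 1 - j) :=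
      Nat.choose_succ_right_eq _ _
    have hcast : (((p - 1).choose (j + 1) : ℕ) : ZMod p) * ((j + 1 : ℕ) : ZMod p)
        = (((p - 1).choose j : ℕ) : ZMod p) * ((p - 1 - j : ℕ) : ZMod p) := by
      rw [← Nat.cast_mul, ← Nat.cast_mul, key]
    have hsub : ((p - 1 - j : ℕ) : ZMod p) = -((j + 1 : ℕ) : ZMod p) := by
      have : (p - 1 - j) + (j + 1) = p := by omega
      have h2 : (((p - 1 - j) + (j + 1) : ℕ) : ZMod p) = 0 := by
        rw [this]; exact ZMod.natCast_self p
      push_cast at h2 ⊢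
      linear_combination h2
    have hunit : ((j + 1 : ℕ) : ZMod p) ≠ 0 := by
      rw [Ne, ZMod.natCast_eq_zero_iff]
      intro hdvd
      have := Nat.le_of_dvd (by omega) hdvd
      omega
    have hfield : IsField (ZMod p) := (ZMod.instField p).toIsField
    have : (((p - 1).choose (j + 1) : ℕ) : ZMod p) * ((j + 1 : ℕ) : ZMod p)
        = (-1) ^ (j + 1) * ((j + 1 : ℕ) : ZMod p) := by
      rw [hcast, ih hj, hsub, pow_succ]; ring
    exact mul_right_cancel₀ hunit this

theorem stmt1 (N : ℕ) (hN : 2 ≤ N) (ℓ : ℕ) (hℓ1 : 1 ≤ ℓ) (hℓ2 : ℓ ≤ N - 1) :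
    N ∣ Nat.factorial (N - 1) * Nat.choose (N - 1) ℓ *
        (Nat.factorial (N - 1) / Nat.factorial ℓ) *
        ∑ i ∈ Finset.range (ℓ + 1), Nat.choose (N - 1) i * Nat.choose ℓ i := by
  by_cases hp : N.Prime
  · -- prime case: N divides the sum
    haveI : Fact N.Prime := ⟨hp⟩
    apply Dvd.dvd.mul_left
    rw [← ZMod.natCast_eq_zero_iff]
    push_cast
    have hsum : ∀ i ∈ Finset.range (ℓ + 1),
        ((Nat.choose (N - 1) i : ℕ) : ZMod N) * ((Nat.choose ℓ i : ℕ) : ZMod N)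
          = (-1) ^ i * ((Nat.choose ℓ i : ℕ) : ZMod N) := by
      intro i hi
      rw [Finset.mem_range] at hi
      rw [aux_choose_zmod N i (by omega)]
    rw [Finset.sum_congr rfl hsum]
    have := Int.alternating_sum_range_choose (n := ℓ)
    rw [if_neg (by omega)] at this
    have hcast : ((∑ i ∈ Finset.range (ℓ + 1), (-1 : ℤ) ^ i * (Nat.choose ℓ i) : ℤ) : ZMod N)
        = 0 := by rw [this]; simp
    push_cast at hcast
    convert hcast using 2
  · by_cases h4 : N = 4
    · subst h4
      interval_cases ℓ <;> decide
    · exact Dvd.dvd.mul_right (Dvd.dvd.mul_right (Dvd.dvd.mul_right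
        (aux_composite_dvd_factorial hN hp h4) _) _) _
end

section
/- Let λ = (λ₁ ≥ ⋯ ≥ λ_k ≥ 0) be a partition with at most k parts and let s_λ denote the k-variable Schur polynomial. Let ∇ = Σ_{i=1}^k ∂/∂X_i. Then ∇(s_λ) = Σ_ℓ (λ_ℓ + k − ℓ) · s_{λ − ε_ℓ}, where the sum is over those indices ℓ ∈ {1,…,k} for which decreasing λ_ℓ by 1 yields a valid partition (i.e. λ_ℓ > λ_{ℓ+1}), and λ − ε_ℓ denotes that partition. -/
open MvPolynomial

private lemma deriv_prod {A : Type*} [CommRing A] (D : Derivation ℤ A A)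
    {ι : Type*} [DecidableEq ι] (s : Finset ι) (f : ι → A) :
    D (∏ i ∈ s, f i) = ∑ i ∈ s, D (f i) * ∏ j ∈ s.erase i, f j := by
  induction s using Finset.induction_on with
  | empty => simp
  | @insert a s ha ih =>
    rw [Finset.prod_insert ha, D.leibniz, smul_eq_mul, smul_eq_mul, ih, Finset.sum_insert ha,
      Finset.erase_insert ha, Finset.mul_sum, add_comm]
    congr 1
    · ring
    · refine Finset.sum_congr rfl fun i hi => ?_
      rw [Finset.erase_insert_of_ne (ne_of_mem_of_not_mem hi ha).symm,
        Finset.prod_insert (fun h => ha (Finset.erase_subset _ _ h))]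
      ring

private lemma deriv_det {A : Type*} [CommRing A] (D : Derivation ℤ A A) {n : ℕ}
    (M : Matrix (Fin n) (Fin n) A) :
    D M.det = ∑ j, (M.updateCol j (fun i => D (M i j))).det := by
  have h1 : ∀ σ : Equiv.Perm (Fin n),
      D ((Equiv.Perm.sign σ : ℤ) • ∏ i, M (σ i) i)
        = ∑ j, (Equiv.Perm.sign σ : ℤ) •
            (D (M (σ j) j) * ∏ i ∈ Finset.univ.erase j, M (σ i) i) := by
    intro σ
    rw [D.map_smul, deriv_prod, Finset.smul_sum]
  calc D M.det = ∑ σ : Equiv.Perm (Fin n), ∑ j, (Equiv.Perm.sign σ : ℤ) •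
            (D (M (σ j) j) * ∏ i ∈ Finset.univ.erase j, M (σ i) i) := by
        rw [Matrix.det_apply, map_sum]
        refine Finset.sum_congr rfl fun σ _ => ?_
        rw [Units.smul_def, h1 σ]
    _ = ∑ j, ∑ σ : Equiv.Perm (Fin n), (Equiv.Perm.sign σ : ℤ) •
            (D (M (σ j) j) * ∏ i ∈ Finset.univ.erase j, M (σ i) i) := Finset.sum_comm
    _ = ∑ j, (M.updateCol j (fun i => D (M i j))).det := by
        refine Finset.sum_congr rfl fun j _ => ?_
        rw [Matrix.det_apply]
        refine (Finset.sum_congr rfl fun σ _ => ?_).symm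
        rw [Units.smul_def]
        congr 1
        rw [← Finset.mul_prod_erase Finset.univ _ (Finset.mem_univ j)]
        congr 1
        · simp [Matrix.updateCol_apply]
        · refine Finset.prod_congr rfl fun i hi => ?_
          rw [Matrix.updateCol_apply, if_neg (Finset.ne_of_mem_erase hi)]

theorem stmt9 (k : ℕ) (hk : 0 < k) (lam : ℕ → ℕ)
    (hdec : ∀ i, lam (i + 1) ≤ lam i) (hz : ∀ i, k ≤ i → lam i = 0)
    (V : MvPolynomial (Fin k) ℤ)
    (hV : V = ∏ p ∈ Finset.univ.filter (fun p : Fin k × Fin k => p.1 < p.2), (X p.1 - X p.2))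
    (s : (ℕ → ℕ) → MvPolynomial (Fin k) ℤ)
    (hs : ∀ mu : ℕ → ℕ, (∀ i, mu (i + 1) ≤ mu i) → (∀ i, k ≤ i → mu i = 0) →
      s mu * V = (Matrix.of fun i j : Fin k => X i ^ (mu j + (k - 1 - (j : ℕ)))).det) :
    (∑ i : Fin k, pderiv i) (s lam) =
      ∑ ℓ ∈ (Finset.range k).filter (fun ℓ => lam (ℓ + 1) < lam ℓ),
        (lam ℓ + (k - 1 - ℓ)) • s (fun i => if i = ℓ then lam ℓ - 1 else lam i) := by
  classical
  set D : Derivation ℤ (MvPolynomial (Fin k) ℤ) (MvPolynomial (Fin k) ℤ) :=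
    ∑ i : Fin k, pderiv i with hD
  -- basic facts about D
  have hDX : ∀ i : Fin k, D (X i : MvPolynomial (Fin k) ℤ) = 1 := by
    intro i
    have hco : (⇑D : MvPolynomial (Fin k) ℤ → MvPolynomial (Fin k) ℤ)
        = ∑ l : Fin k, ⇑(pderiv (R := ℤ) l) := by
      rw [hD]; exact map_sum Derivation.coeFnAddMonoidHom _ _
    rw [hco, Finset.sum_apply,
      Finset.sum_eq_single i (fun l _ hl => pderiv_X_of_ne (Ne.symm hl)) (by simp)]
    exact pderiv_X_self i
  have hDpow : ∀ (i : Fin k) (n : ℕ),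
      D ((X i : MvPolynomial (Fin k) ℤ) ^ n) = n • (X i : MvPolynomial (Fin k) ℤ) ^ (n - 1) := by
    intro i n
    rw [D.leibniz_pow, hDX, smul_eq_mul, mul_one]
  have hDV : D V = 0 := by
    rw [hV]
    refine Finset.prod_induction _ (fun q => D q = 0) (fun x y hx hy => ?_) (by simp) ?_
    · show D (x * y) = 0
      have hx' : D x = 0 := hx
      have hy' : D y = 0 := hy
      rw [D.leibniz, hx', hy', smul_zero, smul_zero, add_zero]
    · intro p _
      show D (X p.1 - X p.2) = 0
      rw [map_sub, hDX, hDX, sub_self]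
  -- the matrix
  set a : ℕ → ℕ := fun j => lam j + (k - 1 - j) with ha
  set M : Matrix (Fin k) (Fin k) (MvPolynomial (Fin k) ℤ) :=
    Matrix.of fun i j : Fin k => X i ^ a (j : ℕ) with hM
  have key : D (s lam * V) = ∑ j, (M.updateCol j (fun i => D (M i j))).det := by
    rw [hs lam hdec hz]; exact deriv_det D M
  have hleib : D (s lam * V) = D (s lam) * V := by
    rw [D.leibniz, hDV, smul_zero, zero_add, smul_eq_mul, mul_comm]
  -- evaluate each term
  have hterm : ∀ j : Fin k, (M.updateCol j (fun i => D (M i j))).det =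
      if lam ((j : ℕ) + 1) < lam (j : ℕ) then
        (a (j : ℕ)) • (s (fun i => if i = (j : ℕ) then lam (j : ℕ) - 1 else lam i) * V)
      else 0 := by
    intro j
    have hjk : (j : ℕ) < k := j.isLt
    have hcol : (fun i => D (M i j)) = ((a (j : ℕ) : MvPolynomial (Fin k) ℤ)) •
        fun i : Fin k => (X i : MvPolynomial (Fin k) ℤ) ^ (a (j : ℕ) - 1) := by
      funext i
      show D ((X i : MvPolynomial (Fin k) ℤ) ^ a (j : ℕ)) = _
      rw [hDpow, Pi.smul_apply, smul_eq_mul, nsmul_eq_mul]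
    rw [hcol, Matrix.det_updateCol_smul]
    by_cases h : lam ((j : ℕ) + 1) < lam (j : ℕ)
    · rw [if_pos h]
      set mu : ℕ → ℕ := fun i => if i = (j : ℕ) then lam (j : ℕ) - 1 else lam i with hmu
      have hlam1 : 1 ≤ lam (j : ℕ) := lt_of_le_of_lt (Nat.zero_le _) h
      have hmudec : ∀ i, mu (i + 1) ≤ mu i := by
        intro i
        have hd := hdec i
        simp only [hmu]
        by_cases h1 : i + 1 = (j : ℕ)
        · rw [if_pos h1, if_neg (by omega), ← h1]
          omega
        · by_cases h2 : i = (j : ℕ)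
          · rw [if_neg h1, if_pos h2]
            subst h2
            omega
          · rw [if_neg h1, if_neg h2]
            exact hd
      have hmuz : ∀ i, k ≤ i → mu i = 0 := by
        intro i hi
        have hne : i ≠ (j : ℕ) := by omega
        simp only [hmu, if_neg hne]
        exact hz i hi
      have heq : M.updateCol j (fun i : Fin k =>
            (X i : MvPolynomial (Fin k) ℤ) ^ (a (j : ℕ) - 1)) =
          Matrix.of fun i j' : Fin k => X i ^ (mu (j' : ℕ) + (k - 1 - (j' : ℕ))) := by
        funext i j'
        rw [Matrix.updateCol_apply]
        rcases eq_or_ne j' j with h3 | h3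
        · rw [if_pos h3, h3]
          show (X i : MvPolynomial (Fin k) ℤ) ^ (a (j : ℕ) - 1)
            = X i ^ (mu (j : ℕ) + (k - 1 - (j : ℕ)))
          congr 1
          simp only [hmu, ha, if_pos rfl]
          omega
        · rw [if_neg h3]
          show (X i : MvPolynomial (Fin k) ℤ) ^ a (j' : ℕ)
            = X i ^ (mu (j' : ℕ) + (k - 1 - (j' : ℕ)))
          have h4 : (j' : ℕ) ≠ (j : ℕ) := fun h5 => h3 (Fin.ext h5)
          simp only [hmu, ha, if_neg h4]
      rw [heq, ← hs mu hmudec hmuz, nsmul_eq_mul]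
    · rw [if_neg h]
      have heqlam : lam ((j : ℕ) + 1) = lam (j : ℕ) := le_antisymm (hdec _) (not_lt.mp h)
      rcases eq_or_ne (j : ℕ) (k - 1) with hj | hj
      · -- last column, a j = 0
        have hlamj : lam (j : ℕ) = 0 := by
          have h0 : lam ((j : ℕ) + 1) = 0 := hz _ (by omega)
          omega
        have h00 : a (j : ℕ) = 0 := by simp only [ha]; omega
        rw [h00, Nat.cast_zero, zero_mul]
      · -- equal columns j and j+1
        have hjlt : (j : ℕ) + 1 < k := by omega
        have hdet : (M.updateCol j fun i : Fin k =>
            (X i : MvPolynomial (Fin k) ℤ) ^ (a (j : ℕ) - 1)).det = 0 := by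
          apply Matrix.det_zero_of_column_eq (i := j) (j := (⟨(j : ℕ) + 1, hjlt⟩ : Fin k))
          · intro h5
            have h6 : (j : ℕ) = (j : ℕ) + 1 := congrArg Fin.val h5
            omega
          · intro i
            rw [Matrix.updateCol_apply, Matrix.updateCol_apply, if_pos rfl,
              if_neg (by intro h5; have h6 : (j : ℕ) + 1 = (j : ℕ) := congrArg Fin.val h5; omega)]
            show (X i : MvPolynomial (Fin k) ℤ) ^ (a (j : ℕ) - 1) = X i ^ a ((j : ℕ) + 1)
            congr 1
            simp only [ha]
            omega
        rw [hdet, mul_zero]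
  -- put it together
  have hsum : D (s lam) * V =
      (∑ ℓ ∈ (Finset.range k).filter (fun ℓ => lam (ℓ + 1) < lam ℓ),
        (lam ℓ + (k - 1 - ℓ)) • s (fun i => if i = ℓ then lam ℓ - 1 else lam i)) * V := by
    rw [← hleib, key]
    rw [Finset.sum_congr rfl (fun j _ => hterm j)]
    rw [Finset.sum_mul, Finset.sum_filter]
    rw [← Fin.sum_univ_eq_sum_range (fun ℓ =>
      if lam (ℓ + 1) < lam ℓ then
        ((lam ℓ + (k - 1 - ℓ)) • s (fun i => if i = ℓ then lam ℓ - 1 else lam i)) * V else 0)]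
    refine Finset.sum_congr rfl fun j _ => ?_
    by_cases h : lam ((j : ℕ) + 1) < lam (j : ℕ)
    · rw [if_pos h, if_pos h, smul_mul_assoc]
    · rw [if_neg h, if_neg h]
  have hVne : V ≠ 0 := by
    rw [hV]
    refine Finset.prod_ne_zero_iff.mpr fun p hp => ?_
    have hplt : p.1 < p.2 := (Finset.mem_filter.mp hp).2
    exact sub_ne_zero.mpr (fun h => absurd (MvPolynomial.X_injective h) (ne_of_lt hplt))
  exact mul_right_cancel₀ hVne hsum
end
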